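/- For any real R > 0 and integer h ≥ 1, let λ = ⌊hR⌋ + 1 and let u₁ = (λ, 0), u₂ = (0, λ). Then the coloring of ℤ² in which two nodes share a color exactly when their difference lies in the lattice generated by u₁ and u₂ is a valid h-hop coloring, using λ² colors. -/

import Mathlib

/-- Euclidean distance between two grid points. -/
noncomputable def gridDist (U V : ℤ × ℤ) : ℝ :=
  Real.sqrt (((U.1 - V.1 : ℤ) : ℝ)^2 + ((U.2 - V.2 : ℤ) : ℝ)^2)

/-- `U` is at most `h` hops from `V` for radio range `R`. -/
def AtMostHops (R : ℝ) (h : ℕ) (U V : ℤ × ℤ) : Prop :=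
  ∃ k ≤ h, ∃ W : ℕ → ℤ × ℤ, W 0 = U ∧ W k = V ∧
    ∀ i < k, 0 < gridDist (W i) (W (i+1)) ∧ gridDist (W i) (W (i+1)) ≤ R

/-!
Two nodes of the same colour differ by a nonzero vector of `λℤ²`, so one of their coordinates
differs by at least `λ` and their distance is at least `λ`. A path of at most `h` hops of length
at most `R` spans a distance at most `hR < ⌊hR⌋ + 1 = λ`, by the triangle inequality.
-/

lemma Int.ncard_range_emod (n : ℤ) : (Set.range (· % n)).ncard = n.natAbs := by
  rcases eq_or_ne n 0 with rfl | hn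
  · simp
  have hrange : Set.range (· % n) = Set.Ico 0 (n.natAbs : ℤ) := by
    ext m
    constructor
    · rintro ⟨a, rfl⟩
      exact ⟨Int.emod_nonneg a hn, Int.emod_lt a hn⟩
    · rintro ⟨hm0, hmn⟩
      refine ⟨m, ?_⟩
      change m % n = m
      rw [← Int.emod_abs, Int.abs_eq_natAbs, Int.emod_eq_of_lt hm0 hmn]
  rw [hrange, ← Finset.coe_Ico, Set.ncard_coe_finset, Int.card_Ico, sub_zero, Int.toNat_natCast]

lemma ncard_range_emod_pair (n : ℤ) :
    (Set.range fun w : ℤ × ℤ => (w.1 % n, w.2 % n)).ncard = n.natAbs ^ 2 := by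
  rw [show (fun w : ℤ × ℤ => (w.1 % n, w.2 % n)) = Prod.map (· % n) (· % n) from rfl,
    Set.range_prodMap, Set.ncard_prod, Int.ncard_range_emod, sq]

lemma emod_pair_eq_iff_dvd (n : ℤ) (U V : ℤ × ℤ) :
    (U.1 % n, U.2 % n) = (V.1 % n, V.2 % n) ↔ n ∣ V.1 - U.1 ∧ n ∣ V.2 - U.2 := by
  rw [Prod.mk.injEq]
  exact and_congr Int.modEq_iff_dvd Int.modEq_iff_dvd

lemma exists_sub_eq_mul_iff_dvd (n : ℤ) (U V : ℤ × ℤ) :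
    (∃ α β : ℤ, V - U = (α * n, β * n)) ↔ n ∣ V.1 - U.1 ∧ n ∣ V.2 - U.2 := by
  simp only [Prod.ext_iff, Prod.fst_sub, Prod.snd_sub, dvd_iff_exists_eq_mul_left]
  exact ⟨fun ⟨α, β, hα, hβ⟩ => ⟨⟨α, hα⟩, ⟨β, hβ⟩⟩, fun ⟨⟨α, hα⟩, ⟨β, hβ⟩⟩ => ⟨α, β, hα, hβ⟩⟩

lemma gridDist_eq_dist (U V : ℤ × ℤ) :
    gridDist U V = dist (⟨U.1, U.2⟩ : ℂ) ⟨V.1, V.2⟩ := by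
  simp [gridDist, Complex.dist_eq_re_im]

lemma abs_fst_sub_le_gridDist (U V : ℤ × ℤ) : |((U.1 - V.1 : ℤ) : ℝ)| ≤ gridDist U V :=
  Real.abs_le_sqrt (le_add_of_nonneg_right (sq_nonneg _))

lemma abs_snd_sub_le_gridDist (U V : ℤ × ℤ) : |((U.2 - V.2 : ℤ) : ℝ)| ≤ gridDist U V :=
  Real.abs_le_sqrt (le_add_of_nonneg_left (sq_nonneg _))

lemma abs_le_gridDist_of_dvd {n : ℤ} {U V : ℤ × ℤ} (hUV : U ≠ V)
    (h₁ : n ∣ V.1 - U.1) (h₂ : n ∣ V.2 - U.2) : (|n| : ℝ) ≤ gridDist U V := by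
  have abs_le_of_dvd {m : ℤ} (hm : m ≠ 0) (hnm : n ∣ m) : |n| ≤ |m| :=
    Int.le_of_dvd (abs_pos.mpr hm) ((abs_dvd_abs _ _).mpr hnm)
  by_cases hfst : U.1 = V.1
  · have hsnd : U.2 - V.2 ≠ 0 := sub_ne_zero.mpr fun h => hUV (Prod.ext hfst h)
    calc (|n| : ℝ) ≤ |((U.2 - V.2 : ℤ) : ℝ)| := by
          exact_mod_cast abs_le_of_dvd hsnd (dvd_sub_comm.mp h₂)
      _ ≤ gridDist U V := abs_snd_sub_le_gridDist U V
  · calc (|n| : ℝ) ≤ |((U.1 - V.1 : ℤ) : ℝ)| := by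
          exact_mod_cast abs_le_of_dvd (sub_ne_zero.mpr hfst) (dvd_sub_comm.mp h₁)
      _ ≤ gridDist U V := abs_fst_sub_le_gridDist U V

lemma gridDist_le_mul_of_forall_gridDist_succ_le {R : ℝ} (W : ℕ → ℤ × ℤ) (k : ℕ)
    (hW : ∀ i < k, gridDist (W i) (W (i + 1)) ≤ R) : gridDist (W 0) (W k) ≤ k * R := by
  simp only [gridDist_eq_dist] at hW ⊢
  calc _ ≤ ∑ i ∈ Finset.range k, dist (⟨(W i).1, (W i).2⟩ : ℂ) ⟨(W (i + 1)).1, (W (i + 1)).2⟩ :=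
        dist_le_range_sum_dist (fun i => (⟨(W i).1, (W i).2⟩ : ℂ)) k
    _ ≤ (Finset.range k).card • R :=
        Finset.sum_le_card_nsmul _ _ _ fun i hi => hW i (Finset.mem_range.mp hi)
    _ = k * R := by rw [Finset.card_range, nsmul_eq_mul]

lemma AtMostHops.gridDist_le {R : ℝ} {h : ℕ} {U V : ℤ × ℤ} (hUV : AtMostHops R h U V)
    (hne : U ≠ V) : gridDist U V ≤ h * R := by
  obtain ⟨k, hkh, W, rfl, rfl, hW⟩ := hUV
  have hk : 0 < k := Nat.pos_of_ne_zero fun hk => hne (by rw [hk])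
  have hR : 0 ≤ R := ((hW 0 hk).1.trans_le (hW 0 hk).2).le
  calc gridDist (W 0) (W k) ≤ k * R :=
        gridDist_le_mul_of_forall_gridDist_succ_le W k fun i hi => (hW i hi).2
    _ ≤ h * R := by gcongr

theorem square_lattice_coloring_general (R : ℝ) (h : ℕ)
    (lam : ℤ) (hlam : lam = ⌊(h : ℝ) * R⌋ + 1)
    (φ : ℤ × ℤ → ℤ × ℤ) (hφ : ∀ w : ℤ × ℤ, φ w = (w.1 % lam, w.2 % lam)) :
    (∀ U V : ℤ × ℤ, φ U = φ V ↔ ∃ α β : ℤ, V - U = (α * lam, β * lam)) ∧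
    (∀ U V : ℤ × ℤ, U ≠ V → AtMostHops R h U V → φ U ≠ φ V) ∧
    Set.ncard (Set.range φ) = lam.natAbs ^ 2 := by
  obtain rfl : φ = fun w => (w.1 % lam, w.2 % lam) := funext hφ
  refine ⟨fun U V => (emod_pair_eq_iff_dvd lam U V).trans
      (exists_sub_eq_mul_iff_dvd lam U V).symm, fun U V hne hhops hsame => ?_,
    ncard_range_emod_pair lam⟩
  obtain ⟨h₁, h₂⟩ := (emod_pair_eq_iff_dvd lam U V).mp hsame
  have hfar : (|lam| : ℝ) ≤ gridDist U V := abs_le_gridDist_of_dvd hne h₁ h₂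
  have hnear : gridDist U V ≤ h * R := hhops.gridDist_le hne
  have hlam_gt : (h : ℝ) * R < lam := by
    rw [hlam]
    push_cast
    exact Int.lt_floor_add_one _
  linarith [le_abs_self (lam : ℝ)]

theorem square_lattice_coloring (R : ℝ) (hR : 0 < R) (h : ℕ) (hh : 1 ≤ h)
    (lam : ℤ) (hlam : lam = ⌊(h : ℝ) * R⌋ + 1)
    (φ : ℤ × ℤ → ℤ × ℤ) (hφ : ∀ w : ℤ × ℤ, φ w = (w.1 % lam, w.2 % lam)) :
    (∀ U V : ℤ × ℤ, φ U = φ V ↔ ∃ α β : ℤ, V - U = (α * lam, β * lam)) ∧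
    (∀ U V : ℤ × ℤ, U ≠ V → AtMostHops R h U V → φ U ≠ φ V) ∧
    Set.ncard (Set.range φ) = lam.natAbs ^ 2 :=
  square_lattice_coloring_general R h lam hlam φ hφ
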